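/- Let u, v be vertices of the whirl graph with u < v in ℚ, let N > 1 satisfy u, v ∈ V_{N−1}, let P be a u–v path in G_{≥N}, and let M ≥ N be the minimal integer such that G_{≤M} contains P. Then no u–v path in G_{≥M+1} is order-compatible with P. -/

import Mathlib

open SimpleGraph

/-- The `n`-th vertex level of the whirl graph: `V_n = {i/3^n : 0 ≤ i ≤ 3^n}`. -/
def Vn (n : ℕ) : Set ℚ := {q | ∃ i : ℕ, i ≤ 3 ^ n ∧ q = (i : ℚ) / 3 ^ n}

/-- The `n`-th edge level of the whirl graph. -/
def En (n : ℕ) : Set (Sym2 ℚ) :=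
  {e | ∃ k : ℕ, k < 3 ^ (n - 1) ∧
    (e = s(((3 * k : ℕ) : ℚ) / 3 ^ n, ((3 * k + 2 : ℕ) : ℚ) / 3 ^ n) ∨
     e = s(((3 * k + 1 : ℕ) : ℚ) / 3 ^ n, ((3 * k + 2 : ℕ) : ℚ) / 3 ^ n) ∨
     e = s(((3 * k + 1 : ℕ) : ℚ) / 3 ^ n, ((3 * k + 3 : ℕ) : ℚ) / 3 ^ n))}

/-- The vertex set `V = ⋃_{n ≥ 1} V_n` of the whirl graph. -/
def whirlV : Set ℚ := ⋃ n ≥ 1, Vn n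

/-- The whirl graph `G`, as a simple graph on `ℚ` with edge set `⋃_{n ≥ 1} E_n`. -/
def whirl : SimpleGraph ℚ := fromEdgeSet (⋃ n ≥ 1, En n)

/-- `G_{≤ n} = (V_n, E_1 ∪ ⋯ ∪ E_n)`. -/
def Gle (n : ℕ) : SimpleGraph ℚ := fromEdgeSet (⋃ k ∈ Set.Icc 1 n, En k)

/-- `G_{≥ n} = (V, ⋃_{k ≥ n} E_k)`. -/
def Gge (n : ℕ) : SimpleGraph ℚ := fromEdgeSet (⋃ k ≥ n, En k)

/-- Two walks are edge-disjoint if they share no edge. -/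
def WalkEdgeDisjoint {V : Type*} {G : SimpleGraph V} {u v : V}
    (p q : G.Walk u v) : Prop :=
  ∀ e, e ∈ p.edges → e ∉ q.edges

/-- Two lists (of supports of paths) traverse their common entries in the same order. -/
def ListCompat {α : Type*} [DecidableEq α] (l₁ l₂ : List α) : Prop :=
  ∀ x y, x ∈ l₁ → y ∈ l₁ → x ∈ l₂ → y ∈ l₂ →
    (l₁.idxOf x ≤ l₁.idxOf y ↔ l₂.idxOf x ≤ l₂.idxOf y)



lemma qdiv_lt {n a b : ℕ} : (a:ℚ)/3^n < (b:ℚ)/3^n ↔ a < b := by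
  rw [div_lt_div_iff_of_pos_right (by positivity)]
  exact_mod_cast Iff.rfl

lemma qdiv_eq {n m a b : ℕ} : (a:ℚ)/3^n = (b:ℚ)/3^m ↔ a * 3^m = b * 3^n := by
  rw [div_eq_div_iff (by positivity) (by positivity)]
  constructor <;> intro h <;> exact_mod_cast h

lemma Vn_mono {m n : ℕ} (h : m ≤ n) : Vn m ⊆ Vn n := by
  rintro q ⟨i, hi, rfl⟩
  have hp : (3:ℕ)^(n-m) * 3^m = 3^n := by rw [← pow_add]; congr 1; omega
  refine ⟨i * 3^(n-m), ?_, ?_⟩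
  · calc i * 3^(n-m) ≤ 3^m * 3^(n-m) := Nat.mul_le_mul_right _ hi
      _ = 3^n := by rw [← pow_add]; congr 1; omega
  · rw [eq_comm, qdiv_eq, mul_assoc, hp]

lemma no_nat_between {j m k a b i : ℕ} (hm : m + 1 ≤ j) (ha : 3*k ≤ a) (hb : b ≤ 3*k+3) :
    ¬ ((a:ℚ)/3^j < (i:ℚ)/3^m ∧ (i:ℚ)/3^m < (b:ℚ)/3^j) := by
  rintro ⟨h1, h2⟩
  have he : (i:ℚ)/3^m = ((i * 3^(j-m) : ℕ):ℚ)/3^j := by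
    rw [qdiv_eq]
    push_cast
    rw [mul_assoc, ← pow_add]
    congr 2
    omega
  rw [he, qdiv_lt] at h1
  rw [he, qdiv_lt] at h2
  have h3 : i * 3^(j-m) = 3 * (i * 3^(j-m-1)) := by
    have hh : (3:ℕ)^(j-m) = 3 * 3^(j-m-1) := by rw [← pow_succ']; congr 1; omega
    rw [hh]; ring
  omega

lemma no_cross {n m : ℕ} (hm : m + 1 ≤ n) {x y t : ℚ} (ht : t ∈ Vn m)
    (hxy : (Gge n).Adj x y) : ¬ (x < t ∧ t < y) := by
  obtain ⟨i, hi, rfl⟩ := ht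
  rw [Gge, fromEdgeSet_adj] at hxy
  obtain ⟨hmem, -⟩ := hxy
  simp only [Set.mem_iUnion, exists_prop] at hmem
  obtain ⟨j, hj, k, hk, hc⟩ := hmem
  have hmj : m + 1 ≤ j := le_trans hm hj
  rcases hc with hc | hc | hc <;> rw [Sym2.eq_iff] at hc <;>
    rcases hc with ⟨rfl, rfl⟩ | ⟨rfl, rfl⟩ <;>
    exact no_nat_between (k := k) hmj (by omega) (by omega)

lemma cross_mem {n m : ℕ} (hm : m + 1 ≤ n) {t : ℚ} (ht : t ∈ Vn m)
    {a b : ℚ} (W : (Gge n).Walk a b) (h1 : a ≤ t) (h2 : t ≤ b) : t ∈ W.support := by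
  induction W with
  | nil => simpa using le_antisymm h2 h1
  | @cons x y z h q ih =>
    rw [Walk.support_cons]
    by_cases hat : x = t
    · simp [hat]
    · have halt : x < t := lt_of_le_of_ne h1 hat
      have hc := no_cross hm ht h
      have hyt : y ≤ t := by
        by_contra hyt
        exact hc ⟨halt, lt_of_not_ge hyt⟩
      exact List.mem_cons_of_mem _ (ih hyt h2)

lemma cross_lt {n m : ℕ} (hm : m + 1 ≤ n) {t1 t2 : ℚ} (h1 : t1 ∈ Vn m) (h2 : t2 ∈ Vn m)
    (h12 : t1 < t2) {a b : ℚ} (W : (Gge n).Walk a b) (hat : a ≤ t1) (ht2 : t2 ∈ W.support) :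
    W.support.idxOf t1 < W.support.idxOf t2 := by
  induction W with
  | nil =>
    exfalso
    simp only [Walk.support_nil, List.mem_singleton] at ht2
    subst ht2
    exact absurd (lt_of_le_of_lt hat h12) (lt_irrefl _)
  | @cons x y z h q ih =>
    rw [Walk.support_cons]
    have hxt2 : x ≠ t2 := ne_of_lt (lt_of_le_of_lt hat h12)
    have ht2q : t2 ∈ q.support := by
      rcases (List.mem_cons.mp (by rwa [Walk.support_cons] at ht2)) with h' | h'
      · exact absurd h'.symm hxt2
      · exact h'
    rw [List.idxOf_cons_ne _ hxt2]
    by_cases hxt1 : x = t1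
    · rw [← hxt1, List.idxOf_cons_self]
      exact Nat.succ_pos _
    · have halt : x < t1 := lt_of_le_of_ne hat hxt1
      have hyt : y ≤ t1 := by
        by_contra hyt
        exact no_cross hm h1 h ⟨halt, lt_of_not_ge hyt⟩
      rw [List.idxOf_cons_ne _ hxt1]
      exact Nat.succ_lt_succ (ih hyt ht2q)


lemma idx_edge {V : Type*} [DecidableEq V] {G : SimpleGraph V} {a b : V} {p : G.Walk a b}
    (hp : p.IsPath) {x y : V} (hxy : s(x,y) ∈ p.edges) :
    p.support.idxOf x + 1 = p.support.idxOf y ∨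
    p.support.idxOf y + 1 = p.support.idxOf x := by
  induction p with
  | nil => simp at hxy
  | @cons a c b h q ih =>
    rw [Walk.edges_cons] at hxy
    rw [Walk.support_cons]
    rw [Walk.cons_isPath_iff] at hp
    rcases List.mem_cons.mp hxy with he | he
    · rw [Sym2.eq_iff] at he
      have hca : c ≠ a := h.ne'
      have hq : q.support.idxOf c = 0 := by
        rw [q.support_eq_cons, List.idxOf_cons_self]
      rcases he with ⟨rfl, rfl⟩ | ⟨rfl, rfl⟩
      · left
        rw [List.idxOf_cons_self, List.idxOf_cons_ne _ hca.symm, hq]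
      · right
        rw [List.idxOf_cons_self, List.idxOf_cons_ne _ hca.symm, hq]
    · have hxs : x ∈ q.support := Walk.fst_mem_support_of_mem_edges q he
      have hys : y ∈ q.support := Walk.snd_mem_support_of_mem_edges q he
      have hxa : a ≠ x := fun hh => hp.2 (hh ▸ hxs)
      have hya : a ≠ y := fun hh => hp.2 (hh ▸ hys)
      rw [List.idxOf_cons_ne _ hxa, List.idxOf_cons_ne _ hya]
      rcases ih hp.1 he with h' | h' <;> omega

lemma two_edges {V : Type*} [DecidableEq V] {G : SimpleGraph V} {u v x : V} {p : G.Walk u v}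
    (hp : p.IsPath) (hx : x ∈ p.support) (hxu : x ≠ u) (hxv : x ≠ v) :
    ∃ y z, y ≠ z ∧ s(x,y) ∈ p.edges ∧ s(x,z) ∈ p.edges := by
  obtain ⟨z, hz, W2', hW2'⟩ := Walk.exists_eq_cons_of_ne hxv (p.dropUntil x hx)
  have hz2 : s(x,z) ∈ (p.dropUntil x hx).edges := by rw [hW2']; simp
  obtain ⟨y, hy, W1', hW1'⟩ := Walk.exists_eq_cons_of_ne hxu (p.takeUntil x hx).reverse
  have hy1 : s(x,y) ∈ (p.takeUntil x hx).edges := by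
    have h1 : s(x,y) ∈ (p.takeUntil x hx).reverse.edges := by rw [hW1']; simp
    rwa [Walk.edges_reverse, List.mem_reverse] at h1
  refine ⟨y, z, ?_, Walk.edges_takeUntil_subset _ _ hy1, Walk.edges_dropUntil_subset _ _ hz2⟩
  intro hyz
  subst hyz
  have hnodup : ((p.takeUntil x hx).edges ++ (p.dropUntil x hx).edges).Nodup := by
    rw [← Walk.edges_append, Walk.take_spec]
    exact hp.isTrail.edges_nodup
  exact (List.disjoint_of_nodup_append hnodup) hy1 hz2

lemma support_between {n m : ℕ} (hm : m + 1 ≤ n) {u v : ℚ} (hu : u ∈ Vn m) (hv : v ∈ Vn m)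
    (huv : u ≤ v) {p : (Gge n).Walk u v} (hp : p.IsPath) {w : ℚ} (hw : w ∈ p.support) :
    u ≤ w ∧ w ≤ v := by
  have hnd : ((p.takeUntil w hw).support ++ (p.dropUntil w hw).support.tail).Nodup := by
    rw [← Walk.support_append, Walk.take_spec]
    exact hp.support_nodup
  have hdisj := List.disjoint_of_nodup_append hnd
  constructor
  · by_contra hlt
    push_neg at hlt
    have hwu : w ≠ u := ne_of_lt hlt
    have h2 : u ∈ (p.dropUntil w hw).support :=
      cross_mem hm hu (p.dropUntil w hw) hlt.le huv
    have h3 : u ∈ (p.dropUntil w hw).support.tail := by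
      rcases List.mem_cons.mp (by rwa [(p.dropUntil w hw).support_eq_cons] at h2) with h' | h'
      · exact absurd h'.symm hwu
      · exact h'
    exact hdisj ((p.takeUntil w hw).start_mem_support) h3
  · by_contra hlt
    push_neg at hlt
    have hwv : v ≠ w := ne_of_lt hlt
    have h2 : v ∈ (p.takeUntil w hw).support :=
      cross_mem hm hv (p.takeUntil w hw) huv hlt.le
    have h3 : v ∈ (p.dropUntil w hw).support.tail := by
      have h4 : v ∈ (p.dropUntil w hw).support := Walk.end_mem_support _
      rcases List.mem_cons.mp (by rwa [(p.dropUntil w hw).support_eq_cons] at h4) with h' | h'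
      · exact absurd h' hwv
      · exact h'
    exact hdisj h2 h3

lemma level_eq {j M a c : ℕ} (hj : j ≤ M) (hc : ¬ (3 ∣ c)) (h : (a:ℚ)/3^j = (c:ℚ)/3^M) :
    j = M ∧ a = c := by
  rw [qdiv_eq] at h
  have hM : (3:ℕ)^M = 3^(M-j) * 3^j := by rw [← pow_add]; congr 1; omega
  rw [hM, ← mul_assoc] at h
  have h2 : a * 3^(M-j) = c := Nat.eq_of_mul_eq_mul_right (pow_pos (by norm_num) j) h
  by_cases hjM : j = M
  · refine ⟨hjM, ?_⟩
    rw [hjM] at h2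
    simpa using h2
  · exfalso
    have hd : M - j = (M - j - 1) + 1 := by omega
    rw [hd, pow_succ, ← mul_assoc] at h2
    exact hc ⟨a * 3^(M-j-1), by omega⟩

lemma classify {M j : ℕ} {w : ℚ} {c : ℕ} (hj2 : j ≤ M) (hc3 : ¬ (3 ∣ c))
    (h : s(w, (c:ℚ)/3^M) ∈ En j) :
    ∃ k' : ℕ, k' < 3^(M-1) ∧ ∃ b : ℕ, w = (b:ℚ)/3^M ∧
      ((c = 3*k' ∧ b = 3*k'+2) ∨ (c = 3*k'+2 ∧ b = 3*k') ∨
       (c = 3*k'+1 ∧ b = 3*k'+2) ∨ (c = 3*k'+2 ∧ b = 3*k'+1) ∨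
       (c = 3*k'+1 ∧ b = 3*k'+3) ∨ (c = 3*k'+3 ∧ b = 3*k'+1)) := by
  obtain ⟨k', hk', hc⟩ := h
  rcases hc with hc | hc | hc <;> rw [Sym2.eq_iff] at hc <;>
    rcases hc with ⟨hw1, hw2⟩ | ⟨hw1, hw2⟩
  · obtain ⟨hjM, hBc⟩ := level_eq hj2 hc3 hw2.symm
    subst hjM
    exact ⟨k', hk', 3*k', hw1, Or.inr (Or.inl ⟨by omega, rfl⟩)⟩
  · obtain ⟨hjM, hBc⟩ := level_eq hj2 hc3 hw2.symm
    subst hjM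
    exact ⟨k', hk', 3*k'+2, hw1, Or.inl ⟨by omega, rfl⟩⟩
  · obtain ⟨hjM, hBc⟩ := level_eq hj2 hc3 hw2.symm
    subst hjM
    exact ⟨k', hk', 3*k'+1, hw1, Or.inr (Or.inr (Or.inr (Or.inl ⟨by omega, rfl⟩)))⟩
  · obtain ⟨hjM, hBc⟩ := level_eq hj2 hc3 hw2.symm
    subst hjM
    exact ⟨k', hk', 3*k'+2, hw1, Or.inr (Or.inr (Or.inl ⟨by omega, rfl⟩))⟩
  · obtain ⟨hjM, hBc⟩ := level_eq hj2 hc3 hw2.symm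
    subst hjM
    exact ⟨k', hk', 3*k'+1, hw1, Or.inr (Or.inr (Or.inr (Or.inr (Or.inr ⟨by omega, rfl⟩))))⟩
  · obtain ⟨hjM, hBc⟩ := level_eq hj2 hc3 hw2.symm
    subst hjM
    exact ⟨k', hk', 3*k'+3, hw1, Or.inr (Or.inr (Or.inr (Or.inr (Or.inl ⟨by omega, rfl⟩))))⟩

/-- Let `u < v` lie in `V_{N-1}` (`N > 1`), let `P` be a `u`–`v` path in `G_{≥N}`, and let
`M` be the minimal integer (necessarily `M ≥ N`) such that `G_{≤M}` contains `P`. Then no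
`u`–`v` path in `G_{≥M+1}` is order-compatible with `P`. -/
theorem stmt7 (u v : ℚ) (hu : u ∈ whirlV) (hv : v ∈ whirlV) (huv : u < v)
    (N : ℕ) (hN : 1 < N) (huN : u ∈ Vn (N - 1)) (hvN : v ∈ Vn (N - 1))
    (P : (Gge N).Walk u v) (hP : P.IsPath)
    (M : ℕ) (hMN : N ≤ M)
    (hPM : ∀ e ∈ P.edges, e ∈ (Gle M).edgeSet)
    (hmin : ∀ M' : ℕ, (∀ e ∈ P.edges, e ∈ (Gle M').edgeSet) → M ≤ M')
    (Q : (Gge (M + 1)).Walk u v) (hQ : Q.IsPath) :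
    ¬ ListCompat P.support Q.support := by
  classical
  intro hcomp
  have huM : u ∈ Vn (M-1) := Vn_mono (by omega) huN
  have hvM : v ∈ Vn (M-1) := Vn_mono (by omega) hvN
  have h3M : (3:ℕ)^M = 3 * 3^(M-1) := by rw [← pow_succ']; congr 1; omega
  -- P contains an edge of level exactly M
  have hex : ∃ e ∈ P.edges, e ∈ En M := by
    by_contra hno
    push_neg at hno
    have hle : M ≤ M - 1 := by
      apply hmin
      intro e he
      have h1 := hPM e he
      rw [Gle, edgeSet_fromEdgeSet] at h1
      obtain ⟨h2, h3⟩ := h1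
      simp only [Set.mem_iUnion, Set.mem_Icc, exists_prop] at h2
      obtain ⟨j, ⟨hj1, hj2⟩, hEj⟩ := h2
      have hjM : j ≠ M := fun hh => hno e he (hh ▸ hEj)
      rw [Gle, edgeSet_fromEdgeSet]
      refine ⟨?_, h3⟩
      simp only [Set.mem_iUnion, Set.mem_Icc, exists_prop]
      exact ⟨j, ⟨hj1, by omega⟩, hEj⟩
    omega
  obtain ⟨e, heP, k, hk, hcase⟩ := hex
  set t0 : ℚ := ((3 * k : ℕ) : ℚ) / 3 ^ M with ht0
  set t1 : ℚ := ((3 * k + 1 : ℕ) : ℚ) / 3 ^ M with ht1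
  set t2 : ℚ := ((3 * k + 2 : ℕ) : ℚ) / 3 ^ M with ht2
  set t3 : ℚ := ((3 * k + 3 : ℕ) : ℚ) / 3 ^ M with ht3
  -- basic facts
  have hVt0 : t0 ∈ Vn M := ⟨3*k, by omega, ht0⟩
  have hVt1 : t1 ∈ Vn M := ⟨3*k+1, by omega, ht1⟩
  have hVt2 : t2 ∈ Vn M := ⟨3*k+2, by omega, ht2⟩
  have hVt3 : t3 ∈ Vn M := ⟨3*k+3, by omega, ht3⟩
  have hgrid : ∀ c : ℕ, ¬ (3 ∣ c) → ((c:ℚ)/3^M) ∉ Vn (M-1) := by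
    rintro c hc ⟨i, hi, hic⟩
    rw [qdiv_eq, h3M] at hic
    have h5 : c * 3^(M-1) = (3*i) * 3^(M-1) := by rw [hic]; ring
    have h6 : c = 3*i := Nat.eq_of_mul_eq_mul_right (pow_pos (by norm_num) _) h5
    exact hc ⟨i, h6⟩
  have ht1u : t1 ≠ u := fun hh => hgrid (3*k+1) (by omega) (by rw [← ht1, hh]; exact huM)
  have ht1v : t1 ≠ v := fun hh => hgrid (3*k+1) (by omega) (by rw [← ht1, hh]; exact hvM)
  have ht2u : t2 ≠ u := fun hh => hgrid (3*k+2) (by omega) (by rw [← ht2, hh]; exact huM)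
  have ht2v : t2 ≠ v := fun hh => hgrid (3*k+2) (by omega) (by rw [← ht2, hh]; exact hvM)
  -- classification of edges of P at t2 and t1
  have hclass2 : ∀ w : ℚ, s(w, t2) ∈ P.edges → w = t0 ∨ w = t1 := by
    intro w hw
    have h1 := hPM _ hw
    rw [Gle, edgeSet_fromEdgeSet] at h1
    obtain ⟨h2, -⟩ := h1
    simp only [Set.mem_iUnion, Set.mem_Icc, exists_prop] at h2
    obtain ⟨j, ⟨hj1, hj2⟩, hEj⟩ := h2
    rw [ht2] at hEj
    obtain ⟨k', hk', b, hwb, hd⟩ := classify hj2 (by omega) hEj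
    rcases hd with ⟨h5,h6⟩|⟨h5,h6⟩|⟨h5,h6⟩|⟨h5,h6⟩|⟨h5,h6⟩|⟨h5,h6⟩
    · omega
    · left; rw [hwb, ht0]; congr 2; omega
    · omega
    · right; rw [hwb, ht1]; congr 2; omega
    · omega
    · omega
  have hclass1 : ∀ w : ℚ, s(w, t1) ∈ P.edges → w = t2 ∨ w = t3 := by
    intro w hw
    have h1 := hPM _ hw
    rw [Gle, edgeSet_fromEdgeSet] at h1
    obtain ⟨h2, -⟩ := h1
    simp only [Set.mem_iUnion, Set.mem_Icc, exists_prop] at h2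
    obtain ⟨j, ⟨hj1, hj2⟩, hEj⟩ := h2
    rw [ht1] at hEj
    obtain ⟨k', hk', b, hwb, hd⟩ := classify hj2 (by omega) hEj
    rcases hd with ⟨h5,h6⟩|⟨h5,h6⟩|⟨h5,h6⟩|⟨h5,h6⟩|⟨h5,h6⟩|⟨h5,h6⟩
    · omega
    · omega
    · left; rw [hwb, ht2]; congr 2; omega
    · omega
    · right; rw [hwb, ht3]; congr 2; omega
    · omega
  -- two incident edges at an interior vertex
  have hstep2 : t2 ∈ P.support → s(t0, t2) ∈ P.edges ∧ s(t1, t2) ∈ P.edges := by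
    intro hs
    obtain ⟨y, z, hyz, hy, hz⟩ := two_edges hP hs ht2u ht2v
    have hy' := hclass2 y (by rwa [Sym2.eq_swap] at hy)
    have hz' := hclass2 z (by rwa [Sym2.eq_swap] at hz)
    rcases hy' with rfl | rfl <;> rcases hz' with rfl | rfl
    · exact absurd rfl hyz
    · exact ⟨by rwa [Sym2.eq_swap] at hy, by rwa [Sym2.eq_swap] at hz⟩
    · exact ⟨by rwa [Sym2.eq_swap] at hz, by rwa [Sym2.eq_swap] at hy⟩
    · exact absurd rfl hyz
  have hstep1 : t1 ∈ P.support → s(t1, t2) ∈ P.edges ∧ s(t1, t3) ∈ P.edges := by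
    intro hs
    obtain ⟨y, z, hyz, hy, hz⟩ := two_edges hP hs ht1u ht1v
    have hy' := hclass1 y (by rwa [Sym2.eq_swap] at hy)
    have hz' := hclass1 z (by rwa [Sym2.eq_swap] at hz)
    rcases hy' with rfl | rfl <;> rcases hz' with rfl | rfl
    · exact absurd rfl hyz
    · exact ⟨hy, hz⟩
    · exact ⟨hz, hy⟩
    · exact absurd rfl hyz
  -- all three cell edges lie on P
  have hstart : t1 ∈ P.support ∨ t2 ∈ P.support := by
    rcases hcase with rfl | rfl | rfl
    · exact Or.inr (Walk.snd_mem_support_of_mem_edges P heP)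
    · exact Or.inr (Walk.snd_mem_support_of_mem_edges P heP)
    · exact Or.inl (Walk.fst_mem_support_of_mem_edges P heP)
  have hedges : s(t0, t2) ∈ P.edges ∧ s(t1, t2) ∈ P.edges ∧ s(t1, t3) ∈ P.edges := by
    rcases hstart with hs | hs
    · obtain ⟨e12, e13⟩ := hstep1 hs
      have ht2s : t2 ∈ P.support := Walk.snd_mem_support_of_mem_edges P e12
      obtain ⟨e02, -⟩ := hstep2 ht2s
      exact ⟨e02, e12, e13⟩
    · obtain ⟨e02, e12⟩ := hstep2 hs
      have ht1s : t1 ∈ P.support := Walk.fst_mem_support_of_mem_edges P e12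
      obtain ⟨-, e13⟩ := hstep1 ht1s
      exact ⟨e02, e12, e13⟩
  obtain ⟨e02, e12, e13⟩ := hedges
  have ht0s : t0 ∈ P.support := Walk.fst_mem_support_of_mem_edges P e02
  have ht1s : t1 ∈ P.support := Walk.fst_mem_support_of_mem_edges P e12
  have ht2s : t2 ∈ P.support := Walk.snd_mem_support_of_mem_edges P e02
  have ht3s : t3 ∈ P.support := Walk.snd_mem_support_of_mem_edges P e13
  -- bounds
  have hb0 := support_between (m := N-1) (by omega) huN hvN huv.le hP ht0s
  have hb1 := support_between (m := N-1) (by omega) huN hvN huv.le hP ht1s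
  have hb2 := support_between (m := N-1) (by omega) huN hvN huv.le hP ht2s
  have hb3 := support_between (m := N-1) (by omega) huN hvN huv.le hP ht3s
  -- Q visits all four, in increasing order
  have hQ0 : t0 ∈ Q.support := cross_mem (le_refl (M+1)) hVt0 Q hb0.1 hb0.2
  have hQ1 : t1 ∈ Q.support := cross_mem (le_refl (M+1)) hVt1 Q hb1.1 hb1.2
  have hQ2 : t2 ∈ Q.support := cross_mem (le_refl (M+1)) hVt2 Q hb2.1 hb2.2
  have hQ3 : t3 ∈ Q.support := cross_mem (le_refl (M+1)) hVt3 Q hb3.1 hb3.2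
  have hlt12 : t1 < t2 := by rw [ht1, ht2]; exact qdiv_lt.mpr (by omega)
  have hlt03 : t0 < t3 := by rw [ht0, ht3]; exact qdiv_lt.mpr (by omega)
  have hlt01 : t0 < t1 := by rw [ht0, ht1]; exact qdiv_lt.mpr (by omega)
  have hlt23 : t2 < t3 := by rw [ht2, ht3]; exact qdiv_lt.mpr (by omega)
  have hq12 : Q.support.idxOf t1 < Q.support.idxOf t2 :=
    cross_lt (le_refl (M+1)) hVt1 hVt2 hlt12 Q hb1.1 hQ2
  have hq03 : Q.support.idxOf t0 < Q.support.idxOf t3 :=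
    cross_lt (le_refl (M+1)) hVt0 hVt3 hlt03 Q hb0.1 hQ3
  -- index relations on P
  have d02 := idx_edge hP e02
  have d12 := idx_edge hP e12
  have d13 := idx_edge hP e13
  have hne01 : P.support.idxOf t0 ≠ P.support.idxOf t1 :=
    fun hh => (ne_of_lt hlt01) ((List.idxOf_inj ht0s).mp hh)
  have hne23 : P.support.idxOf t2 ≠ P.support.idxOf t3 :=
    fun hh => (ne_of_lt hlt23) ((List.idxOf_inj ht2s).mp hh)
  rcases d12 with h12 | h12
  · -- t1 immediately before t2 on P; then P runs t3, t1, t2, t0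
    have h02 : P.support.idxOf t2 + 1 = P.support.idxOf t0 := by
      rcases d02 with h' | h'
      · exact absurd (by omega) hne01
      · exact h'
    have h13 : P.support.idxOf t3 + 1 = P.support.idxOf t1 := by
      rcases d13 with h' | h'
      · exact absurd (by omega) hne23
      · exact h'
    have hiff := hcomp t3 t0 ht3s ht0s hQ3 hQ0
    have := hiff.mp (by omega)
    omega
  · -- t2 immediately before t1 on P
    have hiff := hcomp t2 t1 ht2s ht1s hQ2 hQ1
    have := hiff.mp (by omega)
    omega
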